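/- Let H ∈ ℝ₊^{r×n} satisfy the NC-SSC. Then the condition C ⊆ cone(H) fails if and only if there exists x ∈ ℝ^r with Hᵀx ≥ 0, eᵀx = 1, and ‖x‖₂ > 1. -/

import Mathlib

noncomputable def euclidEnorm {r : ℕ} (x : Fin r → ℝ) : ℝ := Real.sqrt (∑ i, (x i) ^ 2)

def sscCone (r : ℕ) : Set (Fin r → ℝ) :=
  {x | Real.sqrt ((r : ℝ) - 1) * euclidEnorm x ≤ ∑ i, x i}

def coneOf {r n : ℕ} (H : Matrix (Fin r) (Fin n) ℝ) : Set (Fin r → ℝ) :=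
  {x | ∃ y : Fin n → ℝ, (∀ j, 0 ≤ y j) ∧ H.mulVec y = x}

/-!
Write `e` for the all-ones vector. The containment `C ⊆ cone(H)` is equivalent to
`cone(H)* ⊆ C*`. Here `cone(H)* = {x : Hᵀx ≥ 0}` by Farkas' lemma, which applies because a
finitely generated cone is closed (by Carathéodory's argument it is a finite union of images of
orthants under injective linear maps), and `C* = {x : ‖x‖ ≤ eᵀx}`, since `C` and `{‖x‖ ≤ eᵀx}` are
circular cones around `e` whose half-angles add up to `π / 2`. The NC-SSC puts `e - eᵢ` in
`cone(H)`, so every `x ∈ cone(H)*` has `xᵢ ≤ eᵀx`; for `r ≥ 2` this forces `eᵀx ≥ 0`, with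
equality only at `x = 0`, hence `cone(H)* ⊆ C*` only has to be checked on the slice `eᵀx = 1`.
-/

open Set Matrix
open scoped InnerProductSpace

section FiniteCone

variable {ι : Type*} [Fintype ι]

theorem exists_nonneg_sub_smul_apply_eq_zero {y g : ι → ℝ} (hy : 0 ≤ y) (hg : g ≠ 0) :
    ∃ i, ∃ t : ℝ, 0 ≤ y - t • g ∧ (y - t • g) i = 0 := by
  wlog hpos : ∃ i, 0 < g i generalizing g
  · push Not at hpos
    obtain ⟨i, t, hnonneg, hi⟩ := this (neg_ne_zero.mpr hg)
      (by
        obtain ⟨i, hi⟩ := Function.ne_iff.mp hg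
        exact ⟨i, by simpa using (hpos i).lt_of_ne hi⟩)
    exact ⟨i, -t, by simpa using hnonneg, by simpa using hi⟩
  classical
  -- `t = y i / g i` for an `i` minimizing this ratio over `g i > 0`
  obtain ⟨i, hi, hmin⟩ := (Finset.univ.filter fun j => 0 < g j).exists_min_image
    (fun j => y j / g j) (by simpa [Finset.Nonempty] using hpos)
  simp only [Finset.mem_filter, Finset.mem_univ, true_and] at hi hmin
  refine ⟨i, y i / g i, fun j => ?_, by simp [hi.ne']⟩
  simp only [Pi.zero_apply, Pi.sub_apply, Pi.smul_apply, smul_eq_mul, sub_nonneg]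
  rcases lt_or_ge 0 (g j) with hj | hj
  · exact (le_div_iff₀ hj).mp (hmin j hj)
  · exact (mul_nonpos_of_nonneg_of_nonpos (div_nonneg (hy i) hi.le) hj).trans (hy j)

variable {E : Type*} [AddCommGroup E] [Module ℝ E]

theorem image_Ici_fintypeLinearCombination_subtype_ne [DecidableEq ι] (v : ι → E) (i : ι) :
    Fintype.linearCombination ℝ (fun j : {j // j ≠ i} => v j) '' Ici 0 =
      Fintype.linearCombination ℝ v '' {y | 0 ≤ y ∧ y i = 0} := by
  ext x
  simp only [mem_image, mem_Ici, mem_ofPred_eq, Fintype.linearCombination_apply]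
  constructor
  · rintro ⟨w, hw, rfl⟩
    refine ⟨fun j => if h : j = i then 0 else w ⟨j, h⟩, ⟨fun j => ?_, by simp⟩, ?_⟩
    · by_cases h : j = i
      · simp [h]
      · simpa [h] using hw ⟨j, h⟩
    · rw [Fintype.sum_eq_add_sum_subtype_ne _ i]
      simp only [↓reduceDIte, zero_smul, zero_add]
      exact Finset.sum_congr rfl fun j _ => by rw [dif_neg j.2]
  · rintro ⟨y, ⟨hy, hyi⟩, rfl⟩
    refine ⟨fun j => y j, fun j => hy j, ?_⟩
    rw [Fintype.sum_eq_add_sum_subtype_ne _ i, hyi, zero_smul, zero_add]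

variable [TopologicalSpace E] [IsTopologicalAddGroup E] [ContinuousSMul ℝ E] [T2Space E]

theorem LinearIndependent.isClosed_image_Ici {v : ι → E} (hv : LinearIndependent ℝ v) :
    IsClosed (Fintype.linearCombination ℝ v '' Ici 0) :=
  (LinearMap.isClosedEmbedding_of_injective <| LinearMap.ker_eq_bot.mpr
    hv.fintypeLinearCombination_injective).isClosedMap _ isClosed_Ici

theorem isClosed_image_Ici_fintypeLinearCombination (v : ι → E) :
    IsClosed (Fintype.linearCombination ℝ v '' Ici 0) := by
  induction h : Fintype.card ι using Nat.strong_induction_on generalizing ι with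
  | _ n ih =>
  by_cases hv : LinearIndependent ℝ v
  · exact hv.isClosed_image_Ici
  classical
  obtain ⟨g, hg, i₀, hi₀⟩ := Fintype.not_linearIndependent_iff.mp hv
  have hunion : Fintype.linearCombination ℝ v '' Ici 0 =
      ⋃ i : ι, Fintype.linearCombination ℝ (fun j : {j // j ≠ i} => v j) '' Ici 0 := by
    refine subset_antisymm ?_ (iUnion_subset fun i => ?_)
    · rintro _ ⟨y, hy, rfl⟩
      obtain ⟨i, t, hnonneg, hi⟩ :=
        exists_nonneg_sub_smul_apply_eq_zero hy (Function.ne_iff.mpr ⟨i₀, hi₀⟩)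
      refine mem_iUnion.mpr ⟨i, ?_⟩
      rw [image_Ici_fintypeLinearCombination_subtype_ne]
      refine ⟨y - t • g, ⟨hnonneg, hi⟩, ?_⟩
      rw [map_sub, map_smul, Fintype.linearCombination_apply ℝ v g, hg, smul_zero, sub_zero]
    · rw [image_Ici_fintypeLinearCombination_subtype_ne]
      exact image_mono fun y hy => hy.1
  rw [hunion]
  refine isClosed_iUnion_of_finite fun i => ih _ ?_ _ rfl
  exact h ▸ Fintype.card_subtype_lt (p := fun j => j ≠ i) (not_not.mpr rfl)

end FiniteCone

section Inner

variable {E : Type*} [NormedAddCommGroup E] [InnerProductSpace ℝ E]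

theorem norm_sub_inner_smul_sq {u : E} (hu : ‖u‖ = 1) (x : E) :
    ‖x - ⟪u, x⟫_ℝ • u‖ ^ 2 = ‖x‖ ^ 2 - ⟪u, x⟫_ℝ ^ 2 := by
  rw [norm_sub_sq_real, norm_smul, hu, inner_smul_right, real_inner_comm, Real.norm_eq_abs,
    mul_one, sq_abs]
  ring

theorem inner_sub_inner_smul {u : E} (hu : ‖u‖ = 1) (x y : E) :
    ⟪x - ⟪u, x⟫_ℝ • u, y - ⟪u, y⟫_ℝ • u⟫_ℝ = ⟪x, y⟫_ℝ - ⟪u, x⟫_ℝ * ⟪u, y⟫_ℝ := by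
  simp only [inner_sub_left, inner_sub_right, inner_smul_left, inner_smul_right,
    real_inner_self_eq_norm_sq, hu, real_inner_comm u, RCLike.conj_to_real]
  ring

/-- With `p = cos α`, `q = cos β`: circular cones around `u` of half-angles `α + β ≤ π / 2` are
mutually dual. -/
theorem real_inner_nonneg_of_le_inner {u x y : E} (hu : ‖u‖ = 1) {p q : ℝ} (hp : 0 ≤ p)
    (hq : 0 ≤ q) (hpq : 1 ≤ p ^ 2 + q ^ 2) (hx : p * ‖x‖ ≤ ⟪u, x⟫_ℝ)
    (hy : q * ‖y‖ ≤ ⟪u, y⟫_ℝ) : 0 ≤ ⟪x, y⟫_ℝ := by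
  set a := ⟪u, x⟫_ℝ
  set b := ⟪u, y⟫_ℝ
  have hpx : 0 ≤ p * ‖x‖ := by positivity
  have hqy : 0 ≤ q * ‖y‖ := by positivity
  have hx' : ‖x - a • u‖ ≤ q * ‖x‖ := by
    refine (sq_le_sq₀ (norm_nonneg _) (by positivity)).mp ?_
    rw [norm_sub_inner_smul_sq hu]
    nlinarith [mul_self_le_mul_self hpx hx]
  have hy' : ‖y - b • u‖ ≤ p * ‖y‖ := by
    refine (sq_le_sq₀ (norm_nonneg _) (by positivity)).mp ?_
    rw [norm_sub_inner_smul_sq hu]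
    nlinarith [mul_self_le_mul_self hqy hy]
  have hcs := neg_le_of_abs_le (abs_real_inner_le_norm (x - a • u) (y - b • u))
  rw [inner_sub_inner_smul hu] at hcs
  nlinarith [mul_le_mul hx' hy' (norm_nonneg _) (by positivity),
    mul_le_mul hx hy hqy (hpx.trans hx)]

end Inner

section Euclid

variable {r : ℕ}

theorem euclidEnorm_eq_norm (x : Fin r → ℝ) :
    euclidEnorm x = ‖(WithLp.toLp 2 x : EuclideanSpace ℝ (Fin r))‖ := by
  simp [euclidEnorm, EuclideanSpace.norm_eq]

theorem inner_toLp (x y : Fin r → ℝ) :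
    ⟪(WithLp.toLp 2 x : EuclideanSpace ℝ (Fin r)), WithLp.toLp 2 y⟫_ℝ = ∑ i, x i * y i := by
  simp [PiLp.inner_apply, mul_comm]

theorem euclidEnorm_smul (a : ℝ) (x : Fin r → ℝ) :
    euclidEnorm (a • x) = |a| * euclidEnorm x := by
  rw [euclidEnorm_eq_norm, euclidEnorm_eq_norm, WithLp.toLp_smul, norm_smul, Real.norm_eq_abs]

theorem sum_mul_nonneg_of_mem_sscCone {c x : Fin r → ℝ} (hc : c ∈ sscCone r)
    (hx : euclidEnorm x ≤ ∑ i, x i) : 0 ≤ ∑ i, c i * x i := by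
  rcases Nat.eq_zero_or_pos r with rfl | hr
  · simp
  have hr' : (1 : ℝ) ≤ r := by exact_mod_cast hr
  set s := (√(r : ℝ))⁻¹
  have hs : 0 ≤ s := by positivity
  let u : EuclideanSpace ℝ (Fin r) := WithLp.toLp 2 fun _ => s
  have hu : ‖u‖ = 1 := by
    rw [← euclidEnorm_eq_norm]
    simp [euclidEnorm, s, inv_pow, Real.sq_sqrt (Nat.cast_nonneg r),
      mul_inv_cancel₀ (by positivity : (r : ℝ) ≠ 0)]
  have hu_inner (y : Fin r → ℝ) : ⟪u, WithLp.toLp 2 y⟫_ℝ = s * ∑ i, y i := by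
    rw [inner_toLp, Finset.mul_sum]
  rw [← inner_toLp]
  refine real_inner_nonneg_of_le_inner hu (p := √(r - 1) * s) (q := s) (by positivity) hs
    ?_ ?_ ?_
  · rw [mul_pow, Real.sq_sqrt (by linarith), inv_pow, Real.sq_sqrt (Nat.cast_nonneg r)]
    field_simp
    linarith
  · rw [← euclidEnorm_eq_norm, hu_inner, mul_right_comm, mul_comm _ s]
    exact mul_le_mul_of_nonneg_left hc hs
  · rw [← euclidEnorm_eq_norm, hu_inner]
    exact mul_le_mul_of_nonneg_left hx hs

/-- The witness is `c = s • 1 - x` with `s = (‖x‖² + 1) / 2`: then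
`(∑ c)² - (r - 1)‖c‖² = r (s - 1)²` while `∑ c i * x i = (1 - ‖x‖²) / 2`. -/
theorem exists_mem_sscCone_sum_mul_neg {x : Fin r → ℝ} (hx₁ : ∑ i, x i = 1)
    (hx : 1 < euclidEnorm x) : ∃ c ∈ sscCone r, ∑ i, c i * x i < 0 := by
  have hr : (1 : ℝ) ≤ r := by
    rcases Nat.eq_zero_or_pos r with rfl | hr
    · simp at hx₁
    · exact_mod_cast hr
  set t := ∑ i, x i ^ 2 with ht
  have ht1 : 1 < t := by
    simpa [euclidEnorm, ← ht, Real.lt_sqrt zero_le_one] using hx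
  set s := (t + 1) / 2 with hs
  refine ⟨fun i => s - x i, ?_, ?_⟩
  · have hsum : ∑ i, (s - x i) = r * s - 1 := by
      simp [Finset.sum_sub_distrib, hx₁]
    have hsq : ∑ i, (s - x i) ^ 2 = r * s ^ 2 - 2 * s + t := by
      simp only [sub_sq, Finset.sum_add_distrib, Finset.sum_sub_distrib, ← Finset.mul_sum, hx₁,
        ← ht]
      simp
    show √((r : ℝ) - 1) * √(∑ i, (s - x i) ^ 2) ≤ ∑ i, (s - x i)
    rw [hsum, hsq, ← Real.sqrt_mul (by linarith), Real.sqrt_le_iff]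
    constructor
    · nlinarith
    · have : t = 2 * s - 1 := by rw [hs]; ring
      rw [this]
      nlinarith [mul_nonneg (by linarith : (0 : ℝ) ≤ r) (sq_nonneg (s - 1))]
  · have : ∑ i, (s - x i) * x i = s - t := by
      simp only [sub_mul, Finset.sum_sub_distrib, ← Finset.mul_sum, hx₁, mul_one, ← sq, ht]
    rw [this]
    linarith

theorem sum_nonneg_of_forall_le_sum (hr : 2 ≤ r) {v : Fin r → ℝ}
    (hv : ∀ i, v i ≤ ∑ j, v j) : 0 ≤ ∑ j, v j := by
  have hr' : (2 : ℝ) ≤ r := by exact_mod_cast hr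
  have : ∑ i, v i ≤ r * ∑ j, v j := by
    simpa using Finset.sum_le_sum fun i (_ : i ∈ Finset.univ) => hv i
  nlinarith

end Euclid

section Matrix

variable {r n : ℕ} {H : Matrix (Fin r) (Fin n) ℝ}

theorem coneOf_eq_image_Ici (H : Matrix (Fin r) (Fin n) ℝ) :
    coneOf H = Fintype.linearCombination ℝ H.col '' Ici 0 := by
  have hmulVec (y : Fin n → ℝ) : H *ᵥ y = Fintype.linearCombination ℝ H.col y := by
    ext i; simp [Fintype.linearCombination_apply, mulVec, dotProduct, mul_comm]
  ext x
  simp [coneOf, hmulVec, Pi.le_def]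

theorem isClosed_coneOf (H : Matrix (Fin r) (Fin n) ℝ) : IsClosed (coneOf H) :=
  coneOf_eq_image_Ici H ▸ isClosed_image_Ici_fintypeLinearCombination _

theorem sum_mul_nonneg_of_mem_coneOf {x v : Fin r → ℝ} (hx : x ∈ coneOf H)
    (hv : ∀ j, 0 ≤ ∑ i, H i j * v i) : 0 ≤ ∑ i, x i * v i := by
  obtain ⟨y, hy, rfl⟩ := hx
  calc 0 ≤ ∑ j, y j * ∑ i, H i j * v i :=
        Finset.sum_nonneg fun j _ => mul_nonneg (hy j) (hv j)
    _ = ∑ i, (H *ᵥ y) i * v i := by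
      simp only [mulVec, dotProduct, Finset.sum_mul, Finset.mul_sum]
      rw [Finset.sum_comm]
      exact Finset.sum_congr rfl fun i _ => Finset.sum_congr rfl fun j _ => by ring

theorem exists_separating_of_notMem_coneOf {c : Fin r → ℝ} (hc : c ∉ coneOf H) :
    ∃ v : Fin r → ℝ, (∀ j, 0 ≤ ∑ i, H i j * v i) ∧ ∑ i, c i * v i < 0 := by
  let K : PointedCone ℝ (Fin r → ℝ) :=
    (PointedCone.positive ℝ (Fin n → ℝ)).map H.mulVecLin
  have hK : (K : Set (Fin r → ℝ)) = coneOf H := by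
    ext; simp [K, coneOf, Pi.le_def]
  let C : ProperCone ℝ (Fin r → ℝ) := ⟨K, (congrArg IsClosed hK).mpr (isClosed_coneOf H)⟩
  obtain ⟨f, hf, hfc⟩ := C.hyperplane_separation_point (x₀ := c) (by simpa [C, ← hK] using hc)
  have hf_apply (x : Fin r → ℝ) : f x = ∑ i, x i * f (Pi.single i 1) := by
    conv_lhs => rw [← Finset.univ_sum_single x]
    rw [map_sum]
    refine Finset.sum_congr rfl fun i _ => ?_
    rw [← smul_eq_mul, ← map_smul, ← Pi.single_smul', smul_eq_mul, mul_one]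
  refine ⟨fun i => f (Pi.single i 1), fun j => ?_, by rwa [hf_apply] at hfc⟩
  have hcol : H.col j ∈ C := by
    simpa [C, hK] using
      ⟨Pi.single j 1, fun k => Pi.single_nonneg.mpr zero_le_one k, H.mulVec_single_one j⟩
  have := hf _ hcol
  rwa [hf_apply] at this

theorem le_sum_of_mem_dual {i : Fin r} {v : Fin r → ℝ}
    (hi : (fun j => (1 : ℝ) - if j = i then 1 else 0) ∈ coneOf H)
    (hv : ∀ j, 0 ≤ ∑ k, H k j * v k) : v i ≤ ∑ j, v j := by
  simpa [sub_mul, Finset.sum_sub_distrib, ite_mul] using sum_mul_nonneg_of_mem_coneOf hi hv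

theorem euclidEnorm_le_sum_of_mem_dual (hr : 2 ≤ r)
    (hnc : ∀ i, (fun j => (1 : ℝ) - if j = i then 1 else 0) ∈ coneOf H)
    (hslice : ∀ x : Fin r → ℝ, (∀ j, 0 ≤ ∑ i, H i j * x i) → ∑ i, x i = 1 → euclidEnorm x ≤ 1)
    {v : Fin r → ℝ} (hv : ∀ j, 0 ≤ ∑ i, H i j * v i) : euclidEnorm v ≤ ∑ i, v i := by
  have hle : ∀ i, v i ≤ ∑ j, v j := fun i => le_sum_of_mem_dual (hnc i) hv
  rcases (sum_nonneg_of_forall_le_sum hr hle).eq_or_lt with hzero | hpos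
  · have hv0 : v = 0 := funext fun i =>
      (Finset.sum_eq_zero_iff_of_nonpos fun k _ => hzero ▸ hle k).mp hzero.symm i
        (Finset.mem_univ i)
    simp [hv0, euclidEnorm]
  · set s := ∑ i, v i
    have := hslice (s⁻¹ • v)
      (fun j => by
        simpa [mul_left_comm _ s⁻¹, ← Finset.mul_sum] using
          mul_nonneg (inv_nonneg.mpr hpos.le) (hv j))
      (by simpa [← Finset.mul_sum] using inv_mul_cancel₀ hpos.ne')
    rw [euclidEnorm_smul, abs_of_pos (inv_pos.mpr hpos), inv_mul_le_iff₀ hpos, mul_one] at this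
    exact this

end Matrix

theorem ssc1_fails_iff_general {r n : ℕ} (hr : 2 ≤ r) (H : Matrix (Fin r) (Fin n) ℝ)
    (hnc : ∀ i : Fin r, ∃ y : Fin n → ℝ, (∀ j, 0 ≤ y j) ∧
      H.mulVec y = fun j => (1 : ℝ) - (if j = i then 1 else 0)) :
    ¬ (sscCone r ⊆ coneOf H) ↔
      ∃ x : Fin r → ℝ, (∀ j, 0 ≤ ∑ i, H i j * x i) ∧ (∑ i, x i) = 1 ∧ 1 < euclidEnorm x := by
  constructor
  · intro hfail
    by_contra! hslice
    refine hfail fun c hc => by_contra fun hcH => ?_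
    obtain ⟨v, hv, hcv⟩ := exists_separating_of_notMem_coneOf hcH
    exact hcv.not_ge <| sum_mul_nonneg_of_mem_sscCone hc <|
      euclidEnorm_le_sum_of_mem_dual hr hnc hslice hv
  · rintro ⟨x, hx, hx₁, hxn⟩ hsub
    obtain ⟨c, hc, hcx⟩ := exists_mem_sscCone_sum_mul_neg hx₁ hxn
    exact hcx.not_ge (sum_mul_nonneg_of_mem_coneOf (hsub hc) hx)

/-- Corollary 3.1: under the NC-SSC, `C ⊆ cone(H)` fails iff there is `x` with
`Hᵀx ≥ 0`, `eᵀx = 1` and `‖x‖₂ > 1`. -/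
theorem ssc1_fails_iff {r n : ℕ} (hr : 2 ≤ r) (H : Matrix (Fin r) (Fin n) ℝ)
    (hH : ∀ i j, 0 ≤ H i j)
    (hnc : ∀ i : Fin r, ∃ y : Fin n → ℝ, (∀ j, 0 ≤ y j) ∧
      H.mulVec y = fun j => (1 : ℝ) - (if j = i then 1 else 0)) :
    ¬ (sscCone r ⊆ coneOf H) ↔
      ∃ x : Fin r → ℝ, (∀ j, 0 ≤ ∑ i, H i j * x i) ∧ (∑ i, x i) = 1 ∧ 1 < euclidEnorm x :=
  ssc1_fails_iff_general hr H hnc
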